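/- Fix θ₂ > 0 with θ₂ ≠ 0 and pairwise distinct points d₁ < d₂ < d₃ in [0, ∞). Then the three vectors v_j = (1, exp(d_j/θ₂) − 1, d_j exp(d_j/θ₂))ᵀ ∈ ℝ³ are linearly independent. -/

import Mathlib

/-!
Subtracting the first column from the second and dividing row `j` by `e_j = exp (d_j / θ₂)`
turns the determinant of the three vectors into `e₁ e₂ e₃` times the determinant with rows
`(exp (-d_j / θ₂), 1, d_j)`. The latter is positive: the points `(d_j, exp (-d_j / θ₂))` lie on
the graph of a strictly convex function, so they are not collinear.
-/

open Real

theorem StrictConvexOn.det_graph_points_pos {s : Set ℝ} {f : ℝ → ℝ} (hf : StrictConvexOn ℝ s f)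
    {a b c : ℝ} (ha : a ∈ s) (hc : c ∈ s) (hab : a < b) (hbc : b < c) :
    0 < !![f a, 1, a; f b, 1, b; f c, 1, c].det := by
  have hslope := hf.slope_strict_mono_adjacent ha hc hab hbc
  rw [div_lt_div_iff₀ (sub_pos.2 hab) (sub_pos.2 hbc)] at hslope
  rw [Matrix.det_fin_three]
  simp only [Matrix.of_apply, Matrix.cons_val', Matrix.cons_val_zero, Matrix.cons_val_one,
    Matrix.cons_val_two, Matrix.head_cons, Matrix.tail_cons, Matrix.empty_val',
    Matrix.cons_val_fin_one, Matrix.head_fin_const]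
  linear_combination hslope

theorem strictConvexOn_exp_mul {k : ℝ} (hk : k ≠ 0) :
    StrictConvexOn ℝ Set.univ fun x => exp (k * x) := by
  have hlin : ConvexOn ℝ Set.univ (LinearMap.mul ℝ ℝ k) := LinearMap.convexOn _ convex_univ
  exact (strictConvexOn_exp.subset (Set.subset_univ _) (convex_univ.linear_image _)).comp_convexOn
    hlin (exp_strictMono.monotone.monotoneOn _) (mul_right_injective₀ hk).injOn

theorem det_gradient_rows_eq {e₁ e₂ e₃ : ℝ} (d₁ d₂ d₃ : ℝ)
    (he₁ : e₁ ≠ 0) (he₂ : e₂ ≠ 0) (he₃ : e₃ ≠ 0) :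
    !![1, e₁ - 1, d₁ * e₁; 1, e₂ - 1, d₂ * e₂; 1, e₃ - 1, d₃ * e₃].det =
      e₁ * e₂ * e₃ * !![e₁⁻¹, 1, d₁; e₂⁻¹, 1, d₂; e₃⁻¹, 1, d₃].det := by
  simp only [Matrix.det_fin_three, Matrix.of_apply, Matrix.cons_val', Matrix.cons_val_zero,
    Matrix.cons_val_one, Matrix.cons_val_two, Matrix.head_cons, Matrix.tail_cons,
    Matrix.empty_val', Matrix.cons_val_fin_one, Matrix.head_fin_const]
  field_simp
  ring

theorem exp_model_gradients_linearly_independent_general (θ₂ d₁ d₂ d₃ : ℝ)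
    (hθ' : θ₂ ≠ 0) (h₁₂ : d₁ < d₂) (h₂₃ : d₂ < d₃) :
    LinearIndependent ℝ
      ![![(1 : ℝ), Real.exp (d₁ / θ₂) - 1, d₁ * Real.exp (d₁ / θ₂)],
        ![(1 : ℝ), Real.exp (d₂ / θ₂) - 1, d₂ * Real.exp (d₂ / θ₂)],
        ![(1 : ℝ), Real.exp (d₃ / θ₂) - 1, d₃ * Real.exp (d₃ / θ₂)]] := by
  have hexp_inv (d : ℝ) : (exp (d / θ₂))⁻¹ = exp (-θ₂⁻¹ * d) := by
    rw [← exp_neg, neg_mul, div_eq_inv_mul]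
  have hconvex := strictConvexOn_exp_mul (neg_ne_zero.2 (inv_ne_zero hθ'))
  have hdet := hconvex.det_graph_points_pos (Set.mem_univ d₁) (Set.mem_univ d₃) h₁₂ h₂₃
  refine Matrix.linearIndependent_rows_iff_isUnit.2 <|
    (Matrix.isUnit_iff_isUnit_det _).2 (isUnit_iff_ne_zero.2 ?_)
  refine (det_gradient_rows_eq d₁ d₂ d₃ (exp_ne_zero _) (exp_ne_zero _) (exp_ne_zero _)).trans_ne ?_
  simp only [hexp_inv]
  exact mul_ne_zero (by positivity) hdet.ne'

theorem exp_model_gradients_linearly_independent (θ₂ d₁ d₂ d₃ : ℝ)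
    (hθ : 0 < θ₂) (hθ' : θ₂ ≠ 0) (h₁ : 0 ≤ d₁) (h₁₂ : d₁ < d₂) (h₂₃ : d₂ < d₃) :
    LinearIndependent ℝ
      ![![(1 : ℝ), Real.exp (d₁ / θ₂) - 1, d₁ * Real.exp (d₁ / θ₂)],
        ![(1 : ℝ), Real.exp (d₂ / θ₂) - 1, d₂ * Real.exp (d₂ / θ₂)],
        ![(1 : ℝ), Real.exp (d₃ / θ₂) - 1, d₃ * Real.exp (d₃ / θ₂)]] :=
  exp_model_gradients_linearly_independent_general θ₂ d₁ d₂ d₃ hθ' h₁₂ h₂₃
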